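/- Suppose for all autonomous behaviours 𝔅 (solution sets of P(d/dt)y = 0 with P square invertible polynomial matrix), 𝔅 ⊆ 𝔅_o(G₁) implies 𝔅 ⊆ 𝔅_o(G₂), where 𝔅_o(G_i) = {y ∈ C^∞(ℝ,ℝᵖ) : G_i(d/dt)y = 0}. Then 𝔅_o(G₁) ⊆ 𝔅_o(G₂). -/

import Mathlib

noncomputable def polyOp (p : Polynomial ℝ) (f : ℝ → ℝ) : ℝ → ℝ :=
  fun t => ∑ i ∈ Finset.range (p.natDegree + 1), p.coeff i * iteratedDeriv i f t

noncomputable def matOp {ι : Type*} {p : ℕ} (R : Matrix ι (Fin p) (Polynomial ℝ))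
    (w : Fin p → ℝ → ℝ) : ι → ℝ → ℝ :=
  fun i t => ∑ j, polyOp (R i j) (w j) t

def beh {ι : Type*} {p : ℕ} (R : Matrix ι (Fin p) (Polynomial ℝ)) :
    Set (Fin p → ℝ → ℝ) :=
  {y | (∀ j, ContDiff ℝ (⊤ : ℕ∞) (y j)) ∧ ∀ i t, matOp R y i t = 0}

open Polynomial Finset

namespace AutAux

abbrev Sm (f : ℝ → ℝ) : Prop := ContDiff ℝ (⊤ : ℕ∞) f

lemma Sm.deriv {f : ℝ → ℝ} (hf : Sm f) : Sm (_root_.deriv f) :=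
  (contDiff_infty_iff_deriv.mp hf).2

lemma Sm.iteratedDeriv {f : ℝ → ℝ} (hf : Sm f) (n : ℕ) : Sm (iteratedDeriv n f) := by
  induction n with
  | zero => simpa using hf
  | succ n ih => rw [iteratedDeriv_succ]; exact ih.deriv

lemma Sm.differentiable {f : ℝ → ℝ} (hf : Sm f) : Differentiable ℝ f :=
  ContDiff.differentiable hf (by simp)

lemma polyOp_eq_sum (q : Polynomial ℝ) (f : ℝ → ℝ) {n : ℕ} (h : q.natDegree < n) (t : ℝ) :
    polyOp q f t = ∑ i ∈ Finset.range n, q.coeff i * iteratedDeriv i f t := by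
  unfold polyOp
  refine Finset.sum_subset (Finset.range_subset_range.2 h) ?_
  intro i _ hi
  rw [Polynomial.coeff_eq_zero_of_natDegree_lt (by simpa using hi), zero_mul]

lemma sm_polyOp {f : ℝ → ℝ} (hf : Sm f) (q : Polynomial ℝ) : Sm (polyOp q f) := by
  unfold polyOp
  exact ContDiff.sum fun i _ => contDiff_const.mul (hf.iteratedDeriv i)

lemma deriv_polyOp {f : ℝ → ℝ} (hf : Sm f) (q : Polynomial ℝ) :
    _root_.deriv (polyOp q f) = polyOp q (_root_.deriv f) := by
  funext t
  have hd : ∀ i : ℕ, HasDerivAt (iteratedDeriv i f) (iteratedDeriv (i + 1) f t) t := by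
    intro i
    rw [iteratedDeriv_succ]
    exact ((hf.iteratedDeriv i).differentiable t).hasDerivAt
  have H : HasDerivAt (polyOp q f)
      (∑ i ∈ Finset.range (q.natDegree + 1), q.coeff i * iteratedDeriv (i + 1) f t) t := by
    unfold polyOp
    exact HasDerivAt.fun_sum fun i _ => (hd i).const_mul _
  rw [H.deriv, polyOp]
  refine Finset.sum_congr rfl fun i _ => ?_
  rw [← iteratedDeriv_succ']

lemma iteratedDeriv_polyOp (q : Polynomial ℝ) (m : ℕ) :
    ∀ f : ℝ → ℝ, Sm f → iteratedDeriv m (polyOp q f) = polyOp q (iteratedDeriv m f) := by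
  induction m with
  | zero => intro f hf; simp
  | succ m ih =>
    intro f hf
    rw [iteratedDeriv_succ', deriv_polyOp hf, ih _ hf.deriv, ← iteratedDeriv_succ']

lemma polyOp_zero (f : ℝ → ℝ) (t : ℝ) : polyOp 0 f t = 0 := by simp [polyOp]

lemma polyOp_one {f : ℝ → ℝ} (t : ℝ) : polyOp 1 f t = f t := by simp [polyOp]

lemma polyOp_add (q₁ q₂ : Polynomial ℝ) (f : ℝ → ℝ) (t : ℝ) :
    polyOp (q₁ + q₂) f t = polyOp q₁ f t + polyOp q₂ f t := by
  set n := max (q₁ + q₂).natDegree (max q₁.natDegree q₂.natDegree) + 1 with hn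
  rw [polyOp_eq_sum _ f (n := n) (by omega), polyOp_eq_sum q₁ f (n := n) (by omega),
    polyOp_eq_sum q₂ f (n := n) (by omega), ← Finset.sum_add_distrib]
  refine Finset.sum_congr rfl fun i _ => ?_
  rw [Polynomial.coeff_add]; ring

lemma polyOp_C_mul (a : ℝ) (q : Polynomial ℝ) (f : ℝ → ℝ) (t : ℝ) :
    polyOp (Polynomial.C a * q) f t = a * polyOp q f t := by
  rw [polyOp_eq_sum _ f (n := q.natDegree + 1) ((natDegree_C_mul_le a q).trans_lt (by omega)),
    polyOp, Finset.mul_sum]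
  refine Finset.sum_congr rfl fun i _ => ?_
  rw [Polynomial.coeff_C_mul]; ring

lemma polyOp_monomial (n : ℕ) (a : ℝ) (f : ℝ → ℝ) (t : ℝ) :
    polyOp (Polynomial.monomial n a) f t = a * iteratedDeriv n f t := by
  rw [polyOp_eq_sum _ f (n := n + 1) ((Polynomial.natDegree_monomial_le a).trans_lt (by omega))]
  rw [Finset.sum_eq_single n]
  · rw [Polynomial.coeff_monomial]; simp
  · intro i _ hi; rw [Polynomial.coeff_monomial, if_neg (Ne.symm hi), zero_mul]
  · intro hn; exact absurd (Finset.self_mem_range_succ n) hn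

lemma polyOp_X_mul (q : Polynomial ℝ) (f : ℝ → ℝ) (t : ℝ) :
    polyOp (Polynomial.X * q) f t = polyOp q (_root_.deriv f) t := by
  have h1 : (Polynomial.X * q).natDegree < q.natDegree + 2 := by
    refine (Polynomial.natDegree_mul_le).trans_lt ?_
    have := Polynomial.natDegree_X_le (R := ℝ); omega
  rw [polyOp_eq_sum _ f h1, polyOp_eq_sum q _ (n := q.natDegree + 1) (by omega),
    Finset.sum_range_succ']
  simp only [Polynomial.coeff_X_mul]
  have h0 : (Polynomial.X * q).coeff 0 = 0 := by
    simp [Polynomial.mul_coeff_zero, Polynomial.coeff_X_zero]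
  rw [h0, zero_mul, add_zero]
  refine Finset.sum_congr rfl fun i _ => ?_
  rw [iteratedDeriv_succ']

lemma polyOp_X_pow_mul (n : ℕ) (q : Polynomial ℝ) :
    ∀ f : ℝ → ℝ, Sm f → ∀ t, polyOp (Polynomial.X ^ n * q) f t
      = iteratedDeriv n (polyOp q f) t := by
  induction n with
  | zero => intro f hf t; simp
  | succ n ih =>
    intro f hf t
    have : Polynomial.X ^ (n + 1) * q = Polynomial.X * (Polynomial.X ^ n * q) := by ring
    rw [this, polyOp_X_mul, ih _ hf.deriv t, iteratedDeriv_succ', deriv_polyOp hf]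

lemma polyOp_mul (q₁ q₂ : Polynomial ℝ) {f : ℝ → ℝ} (hf : Sm f) (t : ℝ) :
    polyOp (q₁ * q₂) f t = polyOp q₁ (polyOp q₂ f) t := by
  induction q₁ using Polynomial.induction_on' with
  | add p q hp hq => rw [add_mul, polyOp_add, polyOp_add, hp, hq]
  | monomial n a =>
    rw [← Polynomial.C_mul_X_pow_eq_monomial, mul_assoc, polyOp_C_mul,
      polyOp_X_pow_mul n q₂ f hf t, Polynomial.C_mul_X_pow_eq_monomial, polyOp_monomial]

lemma polyOp_X_pow (k : ℕ) (f : ℝ → ℝ) (t : ℝ) :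
    polyOp (Polynomial.X ^ k) f t = iteratedDeriv k f t := by
  rw [Polynomial.X_pow_eq_monomial, polyOp_monomial, one_mul]


lemma iteratedDeriv_zero_fun (m : ℕ) : iteratedDeriv m (fun _ : ℝ => (0 : ℝ)) = fun _ => 0 := by
  induction m with
  | zero => simp
  | succ m ih => rw [iteratedDeriv_succ, ih]; funext t; simp

lemma polyOp_zero_fun (q : Polynomial ℝ) (t : ℝ) : polyOp q (fun _ => (0 : ℝ)) t = 0 := by
  unfold polyOp
  refine Finset.sum_eq_zero fun i _ => ?_
  rw [iteratedDeriv_zero_fun]; ring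

lemma iteratedDeriv_sum_fun {α : Type*} (s : Finset α) (F : α → ℝ → ℝ)
    (hF : ∀ a ∈ s, Sm (F a)) (m : ℕ) :
    iteratedDeriv m (fun t => ∑ a ∈ s, F a t) = fun t => ∑ a ∈ s, iteratedDeriv m (F a) t := by
  induction m with
  | zero => simp
  | succ m ih =>
    rw [iteratedDeriv_succ, ih]
    funext t
    have H : HasDerivAt (fun u => ∑ a ∈ s, iteratedDeriv m (F a) u)
        (∑ a ∈ s, iteratedDeriv (m + 1) (F a) t) t := by
      refine HasDerivAt.fun_sum fun a ha => ?_
      rw [iteratedDeriv_succ]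
      exact (((hF a ha).iteratedDeriv m).differentiable t).hasDerivAt
    rw [H.deriv]

lemma polyOp_sum_fun {α : Type*} (s : Finset α) (F : α → ℝ → ℝ)
    (hF : ∀ a ∈ s, Sm (F a)) (q : Polynomial ℝ) (t : ℝ) :
    polyOp q (fun u => ∑ a ∈ s, F a u) t = ∑ a ∈ s, polyOp q (F a) t := by
  unfold polyOp
  rw [Finset.sum_comm]
  refine Finset.sum_congr rfl fun i _ => ?_
  rw [iteratedDeriv_sum_fun s F hF i, Finset.mul_sum]

lemma polyOp_sum_poly {α : Type*} (s : Finset α) (Q : α → Polynomial ℝ) (f : ℝ → ℝ) (t : ℝ) :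
    polyOp (∑ a ∈ s, Q a) f t = ∑ a ∈ s, polyOp (Q a) f t := by
  classical
  induction s using Finset.induction_on with
  | empty => simpa using polyOp_zero f t
  | insert _ _ h ih =>
    rw [Finset.sum_insert h, polyOp_add, ih, Finset.sum_insert h]

/-- Row operator. -/
noncomputable def rowOp {p : ℕ} (r : Fin p → Polynomial ℝ) (y : Fin p → ℝ → ℝ) : ℝ → ℝ :=
  fun t => ∑ j, polyOp (r j) (y j) t

lemma sm_rowOp {p : ℕ} (r : Fin p → Polynomial ℝ) {y : Fin p → ℝ → ℝ}
    (hy : ∀ j, Sm (y j)) : Sm (rowOp r y) :=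
  ContDiff.sum fun j _ => sm_polyOp (hy j) (r j)

lemma rowOp_add {p : ℕ} (r₁ r₂ : Fin p → Polynomial ℝ) (y : Fin p → ℝ → ℝ) (t : ℝ) :
    rowOp (r₁ + r₂) y t = rowOp r₁ y t + rowOp r₂ y t := by
  unfold rowOp
  rw [← Finset.sum_add_distrib]
  exact Finset.sum_congr rfl fun j _ => polyOp_add _ _ _ _

lemma rowOp_smul {p : ℕ} (q : Polynomial ℝ) (r : Fin p → Polynomial ℝ) {y : Fin p → ℝ → ℝ}
    (hy : ∀ j, Sm (y j)) (t : ℝ) :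
    rowOp (q • r) y t = polyOp q (rowOp r y) t := by
  unfold rowOp
  rw [polyOp_sum_fun Finset.univ (fun j => polyOp (r j) (y j))
    (fun j _ => sm_polyOp (hy j) (r j)) q t]
  refine Finset.sum_congr rfl fun j _ => ?_
  rw [Pi.smul_apply, smul_eq_mul, polyOp_mul _ _ (hy j)]

lemma rowOp_eq_zero_of_mem_span {p : ℕ} {S : Set (Fin p → Polynomial ℝ)}
    {y : Fin p → ℝ → ℝ} (hy : ∀ j, Sm (y j))
    (hS : ∀ r ∈ S, ∀ t, rowOp r y t = 0) {r : Fin p → Polynomial ℝ}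
    (hr : r ∈ Submodule.span (Polynomial ℝ) S) : ∀ t, rowOp r y t = 0 := by
  induction hr using Submodule.span_induction with
  | mem x hx => exact hS x hx
  | zero => intro t; simp [rowOp, polyOp_zero]
  | add x z hx hz ihx ihz => intro t; rw [rowOp_add, ihx t, ihz t, add_zero]
  | smul q x hx ih =>
    intro t
    rw [rowOp_smul q x hy t]
    have h0 : rowOp x y = fun _ => (0 : ℝ) := funext ih
    rw [h0, polyOp_zero_fun]

lemma sm_polyEval (q : Polynomial ℝ) : Sm (fun t => q.eval t) := by
  have : (fun t : ℝ => q.eval t)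
      = fun t => ∑ i ∈ Finset.range (q.natDegree + 1), q.coeff i * t ^ i := by
    funext t; exact q.eval_eq_sum_range t
  rw [this]
  exact ContDiff.sum fun i _ => contDiff_const.mul (contDiff_id.pow i)

lemma iteratedDeriv_polyEval (q : Polynomial ℝ) (m : ℕ) :
    iteratedDeriv m (fun t => q.eval t) = fun t => (Polynomial.derivative^[m] q).eval t := by
  induction m generalizing q with
  | zero => simp
  | succ m ih =>
    rw [iteratedDeriv_succ']
    have : _root_.deriv (fun t : ℝ => q.eval t) = fun t => (Polynomial.derivative q).eval t := by
      funext t; exact Polynomial.deriv q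
    rw [this, ih, Function.iterate_succ_apply]

lemma iteratedDeriv_comp_iteratedDeriv (f : ℝ → ℝ) (a b : ℕ) :
    iteratedDeriv a (iteratedDeriv b f) = iteratedDeriv (a + b) f := by
  simp only [iteratedDeriv_eq_iterate]
  exact (Function.iterate_add_apply _ a b f).symm


noncomputable def tpoly (f : ℝ → ℝ) (t₀ : ℝ) (k : ℕ) : Polynomial ℝ :=
  ∑ m ∈ Finset.range k,
    Polynomial.C (iteratedDeriv m f t₀ / m.factorial) * (Polynomial.X - Polynomial.C t₀) ^ m

lemma tpoly_natDegree_lt (f : ℝ → ℝ) (t₀ : ℝ) {k : ℕ} (hk : 0 < k) :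
    (tpoly f t₀ k).natDegree < k := by
  have : (tpoly f t₀ k).natDegree ≤ k - 1 := by
    refine natDegree_sum_le_of_forall_le _ _ fun m hm => ?_
    refine Polynomial.natDegree_mul_le.trans ?_
    have h1 : (Polynomial.C (iteratedDeriv m f t₀ / m.factorial) : Polynomial ℝ).natDegree = 0 :=
      Polynomial.natDegree_C _
    have h2 : ((Polynomial.X - Polynomial.C t₀ : Polynomial ℝ) ^ m).natDegree ≤ m := by
      refine Polynomial.natDegree_pow_le.trans ?_
      rw [Polynomial.natDegree_X_sub_C]; omega
    have := Finset.mem_range.mp hm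
    omega
  omega

lemma iterate_derivative_sum' {α : Type*} (s : Finset α) (F : α → Polynomial ℝ) (r : ℕ) :
    Polynomial.derivative^[r] (∑ a ∈ s, F a) = ∑ a ∈ s, Polynomial.derivative^[r] (F a) := by
  induction r generalizing F with
  | zero => simp
  | succ r ih =>
    rw [Function.iterate_succ_apply, Polynomial.derivative_sum, ih]
    exact Finset.sum_congr rfl fun a _ => by rw [Function.iterate_succ_apply]

lemma tpoly_jet (f : ℝ → ℝ) (t₀ : ℝ) (k r : ℕ) (hr : r < k) :
    iteratedDeriv r (fun t => (tpoly f t₀ k).eval t) t₀ = iteratedDeriv r f t₀ := by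
  rw [iteratedDeriv_polyEval]
  simp only [tpoly, iterate_derivative_sum', Polynomial.iterate_derivative_C_mul,
    Polynomial.iterate_derivative_X_sub_pow, Polynomial.eval_finset_sum]
  rw [Finset.sum_eq_single r]
  · simp only [Polynomial.eval_mul, Polynomial.eval_C, nsmul_eq_mul, Polynomial.eval_natCast,
      Nat.sub_self, pow_zero, Polynomial.eval_one, Nat.descFactorial_self, mul_one]
    rw [div_mul_cancel₀]
    exact_mod_cast Nat.factorial_ne_zero r
  · intro m _ hm
    rcases lt_or_gt_of_ne hm with hlt | hgt
    · have : m.descFactorial r = 0 := Nat.descFactorial_eq_zero_iff_lt.mpr hlt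
      simp [this]
    · have hsub : m - r ≠ 0 := Nat.sub_ne_zero_of_lt hgt
      simp only [Polynomial.eval_mul, Polynomial.eval_C, nsmul_eq_mul, Polynomial.eval_natCast,
        Polynomial.eval_pow, Polynomial.eval_sub, Polynomial.eval_X, sub_self,
        zero_pow hsub, mul_zero]
  · intro hrk; exact absurd (Finset.mem_range.mpr hr) hrk

lemma tpoly_op_zero (f : ℝ → ℝ) (t₀ : ℝ) {k : ℕ} (hk : 0 < k) (t : ℝ) :
    polyOp (Polynomial.X ^ k) (fun u => (tpoly f t₀ k).eval u) t = 0 := by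
  rw [polyOp_X_pow, iteratedDeriv_polyEval,
    Polynomial.iterate_derivative_eq_zero (tpoly_natDegree_lt f t₀ hk)]
  simp

end AutAux

open Polynomial Finset AutAux in
set_option maxHeartbeats 1000000 in
/-- Lemma 3 of the paper: if every autonomous behaviour contained in the behaviour of
`G₁` is also contained in that of `G₂`, then the behaviour of `G₁` is contained in
that of `G₂`. -/
theorem autonomous_test_implies_inclusion {q₁ q₂ p : ℕ}
    (G₁ : Matrix (Fin q₁) (Fin p) (Polynomial ℝ))
    (G₂ : Matrix (Fin q₂) (Fin p) (Polynomial ℝ))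
    (h : ∀ P : Matrix (Fin p) (Fin p) (Polynomial ℝ),
      P.det ≠ 0 → beh P ⊆ beh G₁ → beh P ⊆ beh G₂) :
    beh G₁ ⊆ beh G₂ := by
  classical
  rintro y ⟨hys, hyz⟩
  have hyz' : ∀ i' t, rowOp (G₁ i') y t = 0 := hyz
  refine ⟨hys, ?_⟩
  intro i t₀
  -- the row module of G₁ and its Smith normal form
  let N : Submodule (Polynomial ℝ) (Fin p → Polynomial ℝ) :=
    Submodule.span (Polynomial ℝ) (Set.range fun i' => G₁ i')
  obtain ⟨n, ⟨bM, bN, fe, a, hsnf⟩⟩ := N.smithNormalForm (Pi.basisFun (Polynomial ℝ) (Fin p))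
  have ha : ∀ i', a i' ≠ 0 := by
    intro i' h0
    apply bN.ne_zero i'
    have hh := hsnf i'
    rw [h0, zero_smul] at hh
    exact Subtype.ext hh
  have hvanish : ∀ r ∈ N, ∀ t, rowOp r y t = 0 := fun r hr =>
    rowOp_eq_zero_of_mem_span hys (by rintro r' ⟨i', rfl⟩; exact hyz' i') hr
  -- degree bounds
  let D : ℕ := Finset.univ.sup fun j => (G₂ i j).natDegree
  let Q : Fin p → Fin p → Polynomial ℝ := fun l => bM.equivFun (Pi.single l 1)
  let DQ : ℕ := Finset.univ.sup fun lj : Fin p × Fin p => (Q lj.1 lj.2).natDegree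
  let k : ℕ := D + DQ + 1
  have hk : 0 < k := Nat.succ_pos _
  -- the autonomous system P
  let g : Fin p → Polynomial ℝ := fun j =>
    if hj : ∃ i', fe i' = j then a hj.choose else Polynomial.X ^ k
  have hg0 : ∀ j, g j ≠ 0 := by
    intro j
    unfold g
    beta_reduce
    split
    · exact ha _
    · exact pow_ne_zero _ Polynomial.X_ne_zero
  have hgf : ∀ i', g (fe i') = a i' := by
    intro i'
    have hj : ∃ i'', fe i'' = fe i' := ⟨i', rfl⟩
    have heq : hj.choose = i' := fe.injective hj.choose_spec
    unfold g
    beta_reduce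
    rw [dif_pos hj, heq]
  let P : Matrix (Fin p) (Fin p) (Polynomial ℝ) := Matrix.of fun j l => g j * bM j l
  have hProw : ∀ i', (P (fe i') : Fin p → Polynomial ℝ)
      = ((bN i' : Fin p → Polynomial ℝ)) := by
    intro i'
    funext l
    rw [hsnf i']
    show g (fe i') * bM (fe i') l = (a i' • bM (fe i')) l
    rw [hgf i', Pi.smul_apply, smul_eq_mul]
  -- determinant
  have hdet : P.det ≠ 0 := by
    have hPdiag : P = Matrix.diagonal g * Matrix.of (fun j l => bM j l) := by
      ext j l
      rw [Matrix.diagonal_mul]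
      rfl
    have hBdet : (Matrix.of fun j l => bM j l).det ≠ 0 := by
      have h1 : (Pi.basisFun (Polynomial ℝ) (Fin p)).toMatrix (⇑bM)
          = (Matrix.of fun j l => bM j l).transpose := by
        refine Matrix.ext fun i' j' => ?_
        rw [Module.Basis.toMatrix_apply, Pi.basisFun_repr]
        rfl
      have h3 : ((Pi.basisFun (Polynomial ℝ) (Fin p)).toMatrix ⇑bM).det
          * (bM.toMatrix ⇑(Pi.basisFun (Polynomial ℝ) (Fin p))).det = 1 := by
        rw [← Matrix.det_mul, Module.Basis.toMatrix_mul_toMatrix_flip, Matrix.det_one]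
      intro hc
      rw [h1, Matrix.det_transpose, hc, zero_mul] at h3
      exact one_ne_zero h3.symm
    rw [hPdiag, Matrix.det_mul, Matrix.det_diagonal]
    exact mul_ne_zero (Finset.prod_ne_zero_iff.mpr fun j _ => hg0 j) hBdet
  -- the rows of G₁ lie in the row span of P
  have hNle : ∀ x ∈ N, x ∈ Submodule.span (Polynomial ℝ)
      (Set.range fun j => (P j : Fin p → Polynomial ℝ)) := by
    intro x hx
    have hrepr := bN.sum_equivFun ⟨x, hx⟩
    have hco : x = ∑ i', bN.equivFun ⟨x, hx⟩ i' • ((bN i' : Fin p → Polynomial ℝ)) := by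
      calc x = ((∑ i', bN.equivFun ⟨x, hx⟩ i' • bN i' : N) : Fin p → Polynomial ℝ) := by
              rw [hrepr]
        _ = ∑ i', bN.equivFun ⟨x, hx⟩ i' • ((bN i' : Fin p → Polynomial ℝ)) := by
              simp only [Submodule.coe_sum, Submodule.coe_smul]
    rw [hco]
    exact Submodule.sum_mem _ fun i' _ =>
      Submodule.smul_mem _ _ (Submodule.subset_span ⟨fe i', hProw i'⟩)
  have hsub : beh P ⊆ beh G₁ := by
    rintro v ⟨hvs, hvz⟩
    refine ⟨hvs, fun i' t => ?_⟩
    have hmem : (G₁ i') ∈ Submodule.span (Polynomial ℝ)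
        (Set.range fun j => (P j : Fin p → Polynomial ℝ)) :=
      hNle _ (Submodule.subset_span ⟨i', rfl⟩)
    exact rowOp_eq_zero_of_mem_span hvs (by rintro r ⟨j, rfl⟩; exact hvz j) hmem t
  have hP2 : beh P ⊆ beh G₂ := h P hdet hsub
  -- the trajectory z matching the jets of y at t₀
  let w : Fin p → ℝ → ℝ := fun j => rowOp (bM j) y
  have hw : ∀ j, Sm (w j) := fun j => sm_rowOp _ hys
  let wt : Fin p → ℝ → ℝ := fun j =>
    if ∃ i', fe i' = j then w j else fun u => (tpoly (w j) t₀ k).eval u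
  have hwts : ∀ j, Sm (wt j) := by
    intro j
    unfold wt
    beta_reduce
    split
    · exact hw j
    · exact sm_polyEval _
  have hwt_jet : ∀ j r, r < k → iteratedDeriv r (wt j) t₀ = iteratedDeriv r (w j) t₀ := by
    intro j r hr
    unfold wt
    beta_reduce
    split
    · rfl
    · exact tpoly_jet (w j) t₀ k r hr
  have hwt_ann : ∀ j t, polyOp (g j) (wt j) t = 0 := by
    intro j t
    by_cases hj : ∃ i', fe i' = j
    · have hgj : g j = a hj.choose := by unfold g; beta_reduce; rw [dif_pos hj]
      have hwtj : wt j = w j := by unfold wt; beta_reduce; rw [if_pos hj]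
      rw [hgj, hwtj]
      have h1 : polyOp (a hj.choose) (w j) t = rowOp (a hj.choose • bM j) y t :=
        (rowOp_smul _ _ hys t).symm
      rw [h1]
      have h2 : (a hj.choose • bM j) = ((bN hj.choose : Fin p → Polynomial ℝ)) := by
        rw [hsnf hj.choose, hj.choose_spec]
      rw [h2]
      exact hvanish _ (bN hj.choose).2 t
    · have hgj : g j = Polynomial.X ^ k := by unfold g; beta_reduce; rw [dif_neg hj]
      have hwtj : wt j = fun u => (tpoly (w j) t₀ k).eval u := by unfold wt; beta_reduce; rw [if_neg hj]
      rw [hgj, hwtj]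
      exact tpoly_op_zero (w j) t₀ hk t
  -- inverse-coordinate identities
  have hQdef : ∀ l, Q l = bM.equivFun (Pi.single l 1) := fun _ => rfl
  have hQB : (Matrix.of Q) * (Matrix.of fun j l => bM j l) = 1 := by
    refine Matrix.ext fun l m => ?_
    rw [Matrix.mul_apply, Matrix.one_apply]
    have hcoord := congrFun (bM.sum_equivFun (Pi.single l 1)) m
    rw [Finset.sum_apply] at hcoord
    simp only [Pi.smul_apply, smul_eq_mul] at hcoord
    simp only [Matrix.of_apply, hQdef]
    rw [hcoord]
    simp [Pi.single_apply, eq_comm]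
  have hBQ := mul_eq_one_comm.mp hQB
  have hone : ∀ j j', (∑ l, bM j l * Q l j') = if j = j' then 1 else 0 := by
    intro j j'
    have hh := congrFun (congrFun hBQ j) j'
    rw [Matrix.mul_apply] at hh
    simpa [Matrix.one_apply] using hh
  have honeQ : ∀ l m, (∑ j, Q l j * bM j m) = if l = m then 1 else 0 := by
    intro l m
    have hh := congrFun (congrFun hQB l) m
    rw [Matrix.mul_apply] at hh
    simpa [Matrix.one_apply] using hh
  -- define z
  let z : Fin p → ℝ → ℝ := fun l u => ∑ j, polyOp (Q l j) (wt j) u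
  have hzs : ∀ l, Sm (z l) := fun l => ContDiff.sum fun j _ => sm_polyOp (hwts j) _
  have hrowz : ∀ j t, rowOp (bM j) z t = wt j t := by
    intro j t
    have step1 : ∀ l, polyOp (bM j l) (z l) t = ∑ j', polyOp (bM j l * Q l j') (wt j') t := by
      intro l
      have hzl : z l = fun u => ∑ j', polyOp (Q l j') (wt j') u := rfl
      rw [hzl, polyOp_sum_fun Finset.univ (fun j' => polyOp (Q l j') (wt j'))
        (fun j' _ => sm_polyOp (hwts j') _) _ t]
      exact Finset.sum_congr rfl fun j' _ => (polyOp_mul _ _ (hwts j') t).symm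
    calc ∑ l, polyOp (bM j l) (z l) t
        = ∑ l, ∑ j', polyOp (bM j l * Q l j') (wt j') t :=
          Finset.sum_congr rfl fun l _ => step1 l
      _ = ∑ j', ∑ l, polyOp (bM j l * Q l j') (wt j') t := Finset.sum_comm
      _ = ∑ j', polyOp (∑ l, bM j l * Q l j') (wt j') t :=
          Finset.sum_congr rfl fun j' _ => (polyOp_sum_poly _ _ _ _).symm
      _ = ∑ j', polyOp (if j = j' then 1 else 0) (wt j') t := by
          refine Finset.sum_congr rfl fun j' _ => ?_
          rw [hone j j']
      _ = wt j t := by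
          rw [Finset.sum_congr rfl (fun j' _ => apply_ite (fun q => polyOp q (wt j') t) _ _ _)]
          simp only [polyOp_zero]
          rw [Finset.sum_ite_eq]
          simp [polyOp_one]
  have hzbeh : z ∈ beh P := by
    refine ⟨hzs, fun j t => ?_⟩
    show ∑ l, polyOp (P j l) (z l) t = 0
    have hstep : ∀ l, polyOp (P j l) (z l) t = polyOp (g j) (polyOp (bM j l) (z l)) t :=
      fun l => polyOp_mul _ _ (hzs l) t
    calc ∑ l, polyOp (P j l) (z l) t
        = ∑ l, polyOp (g j) (polyOp (bM j l) (z l)) t :=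
          Finset.sum_congr rfl fun l _ => hstep l
      _ = polyOp (g j) (fun u => ∑ l, polyOp (bM j l) (z l) u) t :=
          (polyOp_sum_fun Finset.univ (fun l => polyOp (bM j l) (z l))
            (fun l _ => sm_polyOp (hzs l) _) _ t).symm
      _ = polyOp (g j) (wt j) t := by
          have : (fun u => ∑ l, polyOp (bM j l) (z l) u) = wt j := funext fun u => hrowz j u
          rw [this]
      _ = 0 := hwt_ann j t
  -- representation of y in terms of w
  have hyrepr : ∀ l, y l = fun u => ∑ j, polyOp (Q l j) (w j) u := by
    intro l
    funext u
    have hcalc : ∑ j, polyOp (Q l j) (w j) u = y l u := by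
      calc ∑ j, polyOp (Q l j) (w j) u
          = ∑ j, ∑ m, polyOp (Q l j * bM j m) (y m) u := by
            refine Finset.sum_congr rfl fun j _ => ?_
            have hwj : w j = fun v => ∑ m, polyOp (bM j m) (y m) v := rfl
            rw [show polyOp (Q l j) (w j) u
                = polyOp (Q l j) (fun v => ∑ m, polyOp (bM j m) (y m) v) u from rfl]
            rw [polyOp_sum_fun Finset.univ (fun m => polyOp (bM j m) (y m))
              (fun m _ => sm_polyOp (hys m) _) _ u]
            exact Finset.sum_congr rfl fun m _ => (polyOp_mul _ _ (hys m) u).symm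
        _ = ∑ m, polyOp (∑ j, Q l j * bM j m) (y m) u := by
            rw [Finset.sum_comm]
            exact Finset.sum_congr rfl fun m _ => (polyOp_sum_poly _ _ _ _).symm
        _ = ∑ m, polyOp (if l = m then 1 else 0) (y m) u := by
            refine Finset.sum_congr rfl fun m _ => ?_
            rw [honeQ l m]
        _ = y l u := by
            rw [Finset.sum_congr rfl (fun m _ => apply_ite (fun q => polyOp q (y m) u) _ _ _)]
            simp only [polyOp_zero]
            rw [Finset.sum_ite_eq]
            simp [polyOp_one]
    exact hcalc.symm
  -- jets of z and y agree at t₀ up to order D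
  have hjet : ∀ l m, m ≤ D → iteratedDeriv m (z l) t₀ = iteratedDeriv m (y l) t₀ := by
    intro l m hm
    rw [hyrepr l]
    rw [show z l = fun u => ∑ j, polyOp (Q l j) (wt j) u from rfl]
    rw [iteratedDeriv_sum_fun Finset.univ _ (fun j _ => sm_polyOp (hwts j) _) m,
      iteratedDeriv_sum_fun Finset.univ _ (fun j _ => sm_polyOp (hw j) _) m]
    simp only []
    refine Finset.sum_congr rfl fun j _ => ?_
    rw [iteratedDeriv_polyOp _ m _ (hwts j), iteratedDeriv_polyOp _ m _ (hw j)]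
    unfold polyOp
    refine Finset.sum_congr rfl fun r hr => ?_
    rw [iteratedDeriv_comp_iteratedDeriv, iteratedDeriv_comp_iteratedDeriv]
    have hr' : r ≤ (Q l j).natDegree := Nat.lt_succ_iff.mp (Finset.mem_range.mp hr)
    have hDQ : (Q l j).natDegree ≤ DQ :=
      Finset.le_sup (f := fun lj : Fin p × Fin p => (Q lj.1 lj.2).natDegree)
        (Finset.mem_univ (l, j))
    rw [hwt_jet j (r + m) (by omega)]
  -- conclude
  have hz2 : matOp G₂ z i t₀ = 0 := (hP2 hzbeh).2 i t₀
  rw [← hz2]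
  show ∑ j, polyOp (G₂ i j) (y j) t₀ = ∑ j, polyOp (G₂ i j) (z j) t₀
  refine Finset.sum_congr rfl fun j _ => ?_
  unfold polyOp
  refine Finset.sum_congr rfl fun m hm => ?_
  have hm' : m ≤ D :=
    le_trans (Nat.lt_succ_iff.mp (Finset.mem_range.mp hm))
      (Finset.le_sup (f := fun j => (G₂ i j).natDegree) (Finset.mem_univ j))
  rw [hjet j m hm']
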